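/- Let P be a wulpo that is a box-augmentation of nonempty linearly well-ordered posets C₁, …, Cₙ and a wulpo Q, via a bijection η : C₁ × ⋯ × Cₙ × Q → P. Let q ∈ Q and q' ∈ Q ∪ {∞} with q < q' be such that [q, q') is a maximal branching free interval of Q, let α = rank(Q↾[q, q')) > 0, and let 0ᵢ be the minimal element of Cᵢ. Then rank(η(0₁, …, 0ₙ, q), P) ≤ rank(C₁) ⊗ ⋯ ⊗ rank(Cₙ) ⊗ rank(q, Q), and for every q̂ ∈ [q, q') and all cᵢ ∈ Cᵢ, rank(η(c₁, …, cₙ, q̂), P) < rank(C₁) ⊗ ⋯ ⊗ rank(Cₙ) ⊗ (rank(q, Q) + α), where ⊗ is the natural (Hessenberg) product and + the usual ordinal sum. -/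

import Mathlib

universe v

namespace Ordinal

/-- Natural (Hessenberg) sum of ordinals, as in the older Mathlib (`blsub` spelled as `⨆ succ`). -/
noncomputable def nadd (a b : Ordinal.{v}) : Ordinal.{v} :=
  max (⨆ x : Set.Iio a, Order.succ (nadd x.1 b)) (⨆ x : Set.Iio b, Order.succ (nadd a x.1))
termination_by (a, b)
decreasing_by
  all_goals first
    | exact Prod.Lex.left _ _ x.2
    | exact Prod.Lex.right _ x.2

/-- Natural (Hessenberg) product of ordinals, as in the older Mathlib. -/
noncomputable def nmul (a b : Ordinal.{v}) : Ordinal.{v} :=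
  sInf {c | ∀ a' < a, ∀ b' < b, nadd (nmul a' b) (nmul a b') < nadd c (nmul a' b')}
termination_by (a, b)
decreasing_by
  all_goals first
    | (apply Prod.Lex.left; assumption)
    | (apply Prod.Lex.right; assumption)

end Ordinal

namespace NaturalOps

infixl:70 " ⨳ " => Ordinal.nmul

end NaturalOps

open NaturalOps

universe u

/-- The interval `[p₁, p₂)`, where the right endpoint may be `∞` (i.e. `⊤` in `WithTop P`). -/
def Ival {P : Type u} [PartialOrder P] (p₁ : P) (p₂ : WithTop P) : Set P :=
  {p : P | p₁ ≤ p ∧ (p : WithTop P) < p₂}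

/-- The interval `[p₁, p₂)` is branching free: for every `p ∈ [p₁, p₂)` and every `x < p`,
the elements `x` and `p₁` are comparable. -/
def BranchingFree {P : Type u} [PartialOrder P] (p₁ : P) (p₂ : WithTop P) : Prop :=
  ∀ p ∈ Ival p₁ p₂, ∀ x : P, x < p → x ≤ p₁ ∨ p₁ ≤ x

/-- `[p₁, p₂)` is a maximal branching free interval. -/
def MaxBranchingFree {P : Type u} [PartialOrder P] (p₁ : P) (p₂ : WithTop P) : Prop :=
  (p₁ : WithTop P) ≤ p₂ ∧ BranchingFree p₁ p₂ ∧
    ∀ (q₁ : P) (q₂ : WithTop P), (q₁ : WithTop P) ≤ q₂ → BranchingFree q₁ q₂ →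
      Ival p₁ p₂ ⊆ Ival q₁ q₂ → Ival p₁ p₂ = Ival q₁ q₂

/-- A partial order is upwards linear if for every `p` the set `{x | p < x}` is linearly
ordered. -/
def UpwardsLinear (P : Type u) [PartialOrder P] : Prop :=
  ∀ p x y : P, p < x → p < y → x ≤ y ∨ y ≤ x

/-- `η` witnesses that `A` is a box-augmentation of the factors `C 0, …, C (n-1)` and `Q`:
it is a bijection which is an order embedding in each coordinate separately. -/
def IsBoxAugmentationWith {n : ℕ} (A : Type u) [PartialOrder A] (C : Fin n → Type u)
    [∀ i, PartialOrder (C i)] (Q : Type u) [PartialOrder Q]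
    (η : ((∀ i, C i) × Q) ≃ A) : Prop :=
  (∀ (k : Fin n) (d : ∀ i, C i) (q : Q) (e e' : C k),
      e ≤ e' ↔ η (Function.update d k e, q) ≤ η (Function.update d k e', q)) ∧
  (∀ (d : ∀ i, C i) (q q' : Q), q ≤ q' ↔ η (d, q) ≤ η (d, q'))

/-- The ordinal rank of an element of a well-founded partial order. -/
noncomputable def elRank {P : Type u} [PartialOrder P] [WellFoundedLT P] (p : P) :
    Ordinal.{u} :=
  IsWellFounded.rank (α := P) (· < ·) p

/-- The ordinal rank of a well-founded partial order. -/
noncomputable def ordRank (P : Type u) [PartialOrder P] [WellFoundedLT P] : Ordinal.{u} :=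
  ⨆ p : P, elRank p + 1


/-!
Label `η (c, r)` by the ranks of the `c i` together with the rank of `r` in the ordinal sum of
`Iio q` and `[q, q')`. Upward linearity of `P` makes the `Q`-coordinates of comparable elements
comparable, and maximality of the interval keeps the `Q`-coordinates below `η (c, q̂)` inside
`Iic q ∪ [q, q')`; so `y < y'` raises some coordinate of the label. A set labelled by tuples
below `δ` that avoid the upper cone of a tuple `τ < δ` has rank below `⨳ δ`, by induction on
`⨳ δ`: if some `δ c = x ♯ (δ c - x)` with `0 < x < δ c`, split the set according to whether the
`c`-th label is `< x` or `≥ x` (relabelling the second part by subtracting `x`) and use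
`⨳ δ[c ↦ x] ♯ ⨳ δ[c ↦ δ c - x] = ⨳ δ`; otherwise every `δ c` is a power of `ω`, the parts where
the `c`-th label stays below `τ c` cover the set, and each has rank below `⨳ δ`, a power of `ω`
and hence closed under `♯`.
-/

infixl:65 " ♯ " => Ordinal.nadd

/-! ### Natural sum and natural product -/

namespace Ordinal

theorem nadd_eq_max (a b : Ordinal) :
    a ♯ b = max (⨆ x : Set.Iio a, Order.succ (x.1 ♯ b)) (⨆ x : Set.Iio b, Order.succ (a ♯ x.1)) :=
  nadd.eq_1 a b

theorem lt_nadd_iff {a b c : Ordinal} :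
    a < b ♯ c ↔ (∃ b' < b, a ≤ b' ♯ c) ∨ ∃ c' < c, a ≤ b ♯ c' := by
  rw [nadd_eq_max, lt_max_iff, Ordinal.lt_iSup_iff, Ordinal.lt_iSup_iff]
  simp

theorem nadd_le_iff {a b c : Ordinal} :
    b ♯ c ≤ a ↔ (∀ b' < b, b' ♯ c < a) ∧ ∀ c' < c, b ♯ c' < a := by
  rw [nadd_eq_max, max_le_iff, Ordinal.iSup_le_iff, Ordinal.iSup_le_iff]
  simp

theorem nadd_lt_nadd_left {b c : Ordinal} (h : b < c) (a : Ordinal) : a ♯ b < a ♯ c :=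
  lt_nadd_iff.2 (Or.inr ⟨b, h, le_rfl⟩)

theorem nadd_lt_nadd_right {b c : Ordinal} (h : b < c) (a : Ordinal) : b ♯ a < c ♯ a :=
  lt_nadd_iff.2 (Or.inl ⟨b, h, le_rfl⟩)

theorem nadd_le_nadd_left {b c : Ordinal} (h : b ≤ c) (a : Ordinal) : a ♯ b ≤ a ♯ c :=
  h.lt_or_eq.elim (fun h => (nadd_lt_nadd_left h a).le) (fun h => h ▸ le_rfl)

theorem nadd_le_nadd_right {b c : Ordinal} (h : b ≤ c) (a : Ordinal) : b ♯ a ≤ c ♯ a :=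
  h.lt_or_eq.elim (fun h => (nadd_lt_nadd_right h a).le) (fun h => h ▸ le_rfl)

theorem nadd_le_nadd {a b c d : Ordinal} (h₁ : a ≤ b) (h₂ : c ≤ d) : a ♯ c ≤ b ♯ d :=
  (nadd_le_nadd_left h₂ a).trans (nadd_le_nadd_right h₁ d)

theorem nadd_lt_nadd_of_le_of_lt {a b c d : Ordinal} (h₁ : a ≤ b) (h₂ : c < d) :
    a ♯ c < b ♯ d :=
  (nadd_lt_nadd_left h₂ a).trans_le (nadd_le_nadd_right h₁ d)

theorem nadd_lt_nadd_of_lt_of_le {a b c d : Ordinal} (h₁ : a < b) (h₂ : c ≤ d) :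
    a ♯ c < b ♯ d :=
  (nadd_le_nadd_left h₂ a).trans_lt (nadd_lt_nadd_right h₁ d)

theorem nadd_lt_nadd_iff_right {a b : Ordinal} (c : Ordinal) : a ♯ c < b ♯ c ↔ a < b :=
  ⟨fun h => lt_of_not_ge fun h' => h.not_ge (nadd_le_nadd_right h' c),
    fun h => nadd_lt_nadd_right h c⟩

theorem nadd_le_nadd_iff_right {a b : Ordinal} (c : Ordinal) : a ♯ c ≤ b ♯ c ↔ a ≤ b :=
  ⟨fun h => le_of_not_gt fun h' => h.not_gt (nadd_lt_nadd_right h' c),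
    fun h => nadd_le_nadd_right h c⟩

theorem nadd_comm (a b : Ordinal) : a ♯ b = b ♯ a := by
  induction a using WellFoundedLT.induction generalizing b with | ind a IHa
  induction b using WellFoundedLT.induction with | ind b IHb
  rw [nadd_eq_max, nadd_eq_max b a, max_comm]
  congr 1
  · exact iSup_congr fun x => by rw [IHb x.1 x.2]
  · exact iSup_congr fun x => by rw [IHa x.1 x.2]

@[simp]
theorem nadd_zero (a : Ordinal) : a ♯ 0 = a := by
  induction a using WellFoundedLT.induction with | ind a IH
  refine le_antisymm (nadd_le_iff.2 ⟨fun b hb => by rwa [IH b hb], fun c hc => absurd hc (by simp)⟩)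
    (le_of_forall_lt fun c hc => ?_)
  rw [← IH c hc]
  exact nadd_lt_nadd_right hc 0

@[simp]
theorem zero_nadd (a : Ordinal) : 0 ♯ a = a := by rw [nadd_comm, nadd_zero]

theorem le_self_nadd {a b : Ordinal} : a ≤ a ♯ b :=
  (nadd_zero a).symm.trans_le (nadd_le_nadd_left zero_le a)

theorem lt_nadd_of_pos_left {a b : Ordinal} (h : 0 < a) : b < a ♯ b := by
  simpa using nadd_lt_nadd_right h b

theorem nadd_succ (a b : Ordinal) : a ♯ Order.succ b = Order.succ (a ♯ b) := by
  induction a using WellFoundedLT.induction with | ind a IH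
  refine le_antisymm (nadd_le_iff.2 ⟨fun a' ha => ?_, fun c hc => ?_⟩)
    (Order.succ_le_of_lt (nadd_lt_nadd_left (Order.lt_succ b) a))
  · rw [IH a' ha, Order.succ_lt_succ_iff]
    exact nadd_lt_nadd_right ha b
  · exact Order.lt_succ_iff.2 (nadd_le_nadd_left (Order.lt_succ_iff.1 hc) a)

theorem nadd_one (a : Ordinal) : a ♯ 1 = a + 1 := by
  simpa using nadd_succ a 0

theorem nadd_assoc (a b c : Ordinal) : a ♯ b ♯ c = a ♯ (b ♯ c) := by
  induction a using WellFoundedLT.induction generalizing b c with | ind a IHa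
  induction b using WellFoundedLT.induction generalizing c with | ind b IHb
  induction c using WellFoundedLT.induction with | ind c IHc
  apply le_antisymm
  · refine nadd_le_iff.2 ⟨fun d hd => ?_, fun c' hc => ?_⟩
    · rcases lt_nadd_iff.1 hd with ⟨a', ha, hd⟩ | ⟨b', hb, hd⟩
      · calc d ♯ c ≤ a' ♯ b ♯ c := nadd_le_nadd_right hd c
          _ = a' ♯ (b ♯ c) := IHa a' ha b c
          _ < a ♯ (b ♯ c) := nadd_lt_nadd_right ha _
      · calc d ♯ c ≤ a ♯ b' ♯ c := nadd_le_nadd_right hd c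
          _ = a ♯ (b' ♯ c) := IHb b' hb c
          _ < a ♯ (b ♯ c) := nadd_lt_nadd_left (nadd_lt_nadd_right hb c) a
    · rw [IHc c' hc]
      exact nadd_lt_nadd_left (nadd_lt_nadd_left hc b) a
  · refine nadd_le_iff.2 ⟨fun a' ha => ?_, fun e he => ?_⟩
    · rw [← IHa a' ha b c]
      exact nadd_lt_nadd_right (nadd_lt_nadd_right ha b) c
    · rcases lt_nadd_iff.1 he with ⟨b', hb, he⟩ | ⟨c', hc, he⟩
      · calc a ♯ e ≤ a ♯ (b' ♯ c) := nadd_le_nadd_left he a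
          _ = a ♯ b' ♯ c := (IHb b' hb c).symm
          _ < a ♯ b ♯ c := nadd_lt_nadd_right (nadd_lt_nadd_left hb a) c
      · calc a ♯ e ≤ a ♯ (b ♯ c') := nadd_le_nadd_left he a
          _ = a ♯ b ♯ c' := (IHc c' hc).symm
          _ < a ♯ b ♯ c := nadd_lt_nadd_left hc _

instance : Std.Commutative (α := Ordinal) (· ♯ ·) := ⟨nadd_comm⟩
instance : Std.Associative (α := Ordinal) (· ♯ ·) := ⟨nadd_assoc⟩

theorem add_le_nadd (a b : Ordinal) : a + b ≤ a ♯ b := by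
  induction b using WellFoundedLT.induction with | ind b IH
  refine le_of_forall_lt fun d hd => ?_
  rcases lt_or_ge d a with h | h
  · exact h.trans_le le_self_nadd
  · have hd' : d - a < b := by
      rwa [← add_lt_add_iff_left a, Ordinal.add_sub_cancel_of_le h]
    calc d = a + (d - a) := (Ordinal.add_sub_cancel_of_le h).symm
      _ ≤ a ♯ (d - a) := IH _ hd'
      _ < a ♯ b := nadd_lt_nadd_left hd' a

theorem nmul_eq_sInf (a b : Ordinal) :
    a ⨳ b = sInf {c | ∀ a' < a, ∀ b' < b, a' ⨳ b ♯ a ⨳ b' < c ♯ a' ⨳ b'} :=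
  nmul.eq_1 a b

theorem nmul_nadd_lt {a a' b b' : Ordinal} (ha : a' < a) (hb : b' < b) :
    a' ⨳ b ♯ a ⨳ b' < a ⨳ b ♯ a' ⨳ b' := by
  have hne : {c : Ordinal | ∀ a' < a, ∀ b' < b, a' ⨳ b ♯ a ⨳ b' < c ♯ a' ⨳ b'}.Nonempty := by
    refine ⟨⨆ p : Set.Iio a × Set.Iio b, Order.succ (p.1.1 ⨳ b ♯ a ⨳ p.2.1), fun a' ha b' hb => ?_⟩
    exact (Ordinal.lt_iSup_iff.2 ⟨(⟨a', ha⟩, ⟨b', hb⟩), Order.lt_succ _⟩).trans_le le_self_nadd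
  have := csInf_mem hne
  rw [← nmul_eq_sInf] at this
  exact this a' ha b' hb

theorem nmul_nadd_le {a a' b b' : Ordinal} (ha : a' ≤ a) (hb : b' ≤ b) :
    a' ⨳ b ♯ a ⨳ b' ≤ a ⨳ b ♯ a' ⨳ b' := by
  rcases ha.lt_or_eq with ha | rfl
  · rcases hb.lt_or_eq with hb | rfl
    · exact (nmul_nadd_lt ha hb).le
    · rw [nadd_comm]
  · exact le_rfl

theorem lt_nmul_iff {a b c : Ordinal} :
    c < a ⨳ b ↔ ∃ a' < a, ∃ b' < b, c ♯ a' ⨳ b' ≤ a' ⨳ b ♯ a ⨳ b' := by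
  refine ⟨fun h => ?_, fun ⟨a', ha, b', hb, h⟩ => ?_⟩
  · rw [nmul_eq_sInf] at h
    simpa using notMem_of_lt_csInf h (OrderBot.bddBelow _)
  · rw [← nadd_lt_nadd_iff_right]
    exact h.trans_lt (nmul_nadd_lt ha hb)

theorem nmul_le_iff {a b c : Ordinal} :
    a ⨳ b ≤ c ↔ ∀ a' < a, ∀ b' < b, a' ⨳ b ♯ a ⨳ b' < c ♯ a' ⨳ b' := by
  rw [← not_iff_not]
  simp [lt_nmul_iff]

theorem nmul_comm (a b : Ordinal) : a ⨳ b = b ⨳ a := by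
  induction a using WellFoundedLT.induction generalizing b with | ind a IHa
  induction b using WellFoundedLT.induction with | ind b IHb
  rw [nmul_eq_sInf a b, nmul_eq_sInf b a]
  congr 1
  ext x
  constructor <;> intro H c hc d hd
  · have h := H d hd c hc
    rwa [IHa d hd b, IHb c hc, IHa d hd c, nadd_comm] at h
  · have h := H d hd c hc
    rwa [← IHb d hd, ← IHa c hc b, ← IHa c hc d, nadd_comm] at h

@[simp]
theorem nmul_zero (a : Ordinal) : a ⨳ 0 = 0 :=
  le_antisymm (nmul_le_iff.2 fun _ _ b' hb => absurd hb (by simp)) zero_le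

@[simp]
theorem zero_nmul (a : Ordinal) : 0 ⨳ a = 0 := by rw [nmul_comm, nmul_zero]

@[simp]
theorem nmul_one (a : Ordinal) : a ⨳ 1 = a := by
  induction a using WellFoundedLT.induction with | ind a IH
  refine le_antisymm (nmul_le_iff.2 fun a' ha b' hb => ?_) (le_of_forall_lt fun c hc => ?_)
  · rw [Order.lt_one_iff.1 hb, IH a' ha]
    simpa using ha
  · exact lt_nmul_iff.2 ⟨c, hc, 0, zero_lt_one, by simp [IH c hc]⟩

theorem nmul_lt_nmul_of_pos_left {a b c : Ordinal} (h₁ : a < b) (h₂ : 0 < c) :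
    c ⨳ a < c ⨳ b :=
  lt_nmul_iff.2 ⟨0, h₂, a, h₁, by simp⟩

theorem nmul_lt_nmul_of_pos_right {a b c : Ordinal} (h₁ : a < b) (h₂ : 0 < c) :
    a ⨳ c < b ⨳ c := by
  simpa only [nmul_comm _ c] using nmul_lt_nmul_of_pos_left h₁ h₂

theorem nmul_le_nmul_left {a b : Ordinal} (h : a ≤ b) (c : Ordinal) : c ⨳ a ≤ c ⨳ b := by
  rcases eq_zero_or_pos c with rfl | hc
  · simp
  · rcases h.lt_or_eq with h | rfl
    · exact (nmul_lt_nmul_of_pos_left h hc).le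
    · exact le_rfl

theorem nmul_le_nmul_right {a b : Ordinal} (h : a ≤ b) (c : Ordinal) : a ⨳ c ≤ b ⨳ c := by
  simpa only [nmul_comm _ c] using nmul_le_nmul_left h c

theorem nmul_pos {a b : Ordinal} (ha : 0 < a) (hb : 0 < b) : 0 < a ⨳ b := by
  simpa using nmul_lt_nmul_of_pos_right ha hb

theorem nmul_nadd (a b c : Ordinal) : a ⨳ (b ♯ c) = a ⨳ b ♯ a ⨳ c := by
  induction a using WellFoundedLT.induction generalizing b c with | ind a IHa
  induction b using WellFoundedLT.induction generalizing c with | ind b IHb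
  induction c using WellFoundedLT.induction with | ind c IHc
  apply le_antisymm
  · refine nmul_le_iff.2 fun a' ha d hd => ?_
    rw [IHa a' ha b c]
    rcases lt_nadd_iff.1 hd with ⟨b', hb, hd⟩ | ⟨c', hc, hd⟩
    · have h := nmul_nadd_le ha.le hd
      rw [IHb b' hb c, IHa a' ha b' c] at h
      rw [← nadd_lt_nadd_iff_right (a ⨳ b' ♯ a' ⨳ b')]
      convert nadd_lt_nadd_of_lt_of_le (nmul_nadd_lt ha hb) h using 1 <;> ac_rfl
    · have h := nmul_nadd_le ha.le hd
      rw [IHc c' hc, IHa a' ha b c'] at h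
      rw [← nadd_lt_nadd_iff_right (a ⨳ c' ♯ a' ⨳ c')]
      convert nadd_lt_nadd_of_lt_of_le (nmul_nadd_lt ha hc) h using 1 <;> ac_rfl
  · refine nadd_le_iff.2 ⟨fun d hd => ?_, fun d hd => ?_⟩
    · obtain ⟨a', ha, b', hb, hd⟩ := lt_nmul_iff.1 hd
      have h := nmul_nadd_lt ha (nadd_lt_nadd_right hb c)
      rw [IHa a' ha b c, IHb b' hb c, IHa a' ha b' c] at h
      rw [← nadd_lt_nadd_iff_right (a' ⨳ b' ♯ a' ⨳ c)]
      calc d ♯ a ⨳ c ♯ (a' ⨳ b' ♯ a' ⨳ c) = d ♯ a' ⨳ b' ♯ (a ⨳ c ♯ a' ⨳ c) := by ac_rfl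
        _ ≤ a' ⨳ b ♯ a ⨳ b' ♯ (a ⨳ c ♯ a' ⨳ c) := nadd_le_nadd_right hd _
        _ < _ := by convert h using 1; ac_rfl
    · obtain ⟨a', ha, c', hc, hd⟩ := lt_nmul_iff.1 hd
      have h := nmul_nadd_lt ha (nadd_lt_nadd_left hc b)
      rw [IHa a' ha b c, IHc c' hc, IHa a' ha b c'] at h
      rw [← nadd_lt_nadd_iff_right (a' ⨳ b ♯ a' ⨳ c')]
      calc a ⨳ b ♯ d ♯ (a' ⨳ b ♯ a' ⨳ c') = d ♯ a' ⨳ c' ♯ (a ⨳ b ♯ a' ⨳ b) := by ac_rfl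
        _ ≤ a' ⨳ c ♯ a ⨳ c' ♯ (a ⨳ b ♯ a' ⨳ b) := nadd_le_nadd_right hd _
        _ < _ := by convert h using 1; ac_rfl

theorem nadd_nmul (a b c : Ordinal) : (a ♯ b) ⨳ c = a ⨳ c ♯ b ⨳ c := by
  rw [nmul_comm, nmul_nadd, nmul_comm c, nmul_comm c]

theorem nmul_add_one (a b : Ordinal) : a ⨳ (b + 1) = a ⨳ b ♯ a := by
  rw [← nadd_one, nmul_nadd, nmul_one]

theorem nmul_nadd_lt₃ {a a' b b' c c' : Ordinal} (ha : a' < a) (hb : b' < b) (hc : c' < c) :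
    a' ⨳ b ⨳ c ♯ a ⨳ b' ⨳ c ♯ a ⨳ b ⨳ c' ♯ a' ⨳ b' ⨳ c' <
      a ⨳ b ⨳ c ♯ a' ⨳ b' ⨳ c ♯ a' ⨳ b ⨳ c' ♯ a ⨳ b' ⨳ c' := by
  have := nmul_nadd_lt (nmul_nadd_lt ha hb) hc
  simp only [nadd_nmul] at this
  convert this using 1 <;> ac_rfl

theorem nmul_nadd_lt₃' {a a' b b' c c' : Ordinal} (ha : a' < a) (hb : b' < b) (hc : c' < c) :
    a' ⨳ (b ⨳ c) ♯ a ⨳ (b' ⨳ c) ♯ a ⨳ (b ⨳ c') ♯ a' ⨳ (b' ⨳ c') <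
      a ⨳ (b ⨳ c) ♯ a' ⨳ (b' ⨳ c) ♯ a' ⨳ (b ⨳ c') ♯ a ⨳ (b' ⨳ c') := by
  have := nmul_nadd_lt ha (nmul_nadd_lt hb hc)
  simp only [nmul_nadd] at this
  convert this using 1 <;> ac_rfl

theorem lt_nmul_iff₃ {a b c d : Ordinal} (h : d < a ⨳ b ⨳ c) :
    ∃ a' < a, ∃ b' < b, ∃ c' < c,
      d ♯ a' ⨳ b' ⨳ c ♯ a' ⨳ b ⨳ c' ♯ a ⨳ b' ⨳ c' ≤
        a' ⨳ b ⨳ c ♯ a ⨳ b' ⨳ c ♯ a ⨳ b ⨳ c' ♯ a' ⨳ b' ⨳ c' := by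
  obtain ⟨e, he, c', hc, H₁⟩ := lt_nmul_iff.1 h
  obtain ⟨a', ha, b', hb, H₂⟩ := lt_nmul_iff.1 he
  refine ⟨a', ha, b', hb, c', hc, ?_⟩
  have H₃ := nmul_nadd_le H₂ hc.le
  simp only [nadd_nmul] at H₃
  rw [← nadd_le_nadd_iff_right (e ⨳ c ♯ e ⨳ c')]
  convert nadd_le_nadd H₁ H₃ using 1 <;> ac_rfl

theorem lt_nmul_iff₃' {a b c d : Ordinal} (h : d < a ⨳ (b ⨳ c)) :
    ∃ a' < a, ∃ b' < b, ∃ c' < c,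
      d ♯ a' ⨳ (b' ⨳ c) ♯ a' ⨳ (b ⨳ c') ♯ a ⨳ (b' ⨳ c') ≤
        a' ⨳ (b ⨳ c) ♯ a ⨳ (b' ⨳ c) ♯ a ⨳ (b ⨳ c') ♯ a' ⨳ (b' ⨳ c') := by
  obtain ⟨a', ha, e, he, H₁⟩ := lt_nmul_iff.1 h
  obtain ⟨b', hb, c', hc, H₂⟩ := lt_nmul_iff.1 he
  refine ⟨a', ha, b', hb, c', hc, ?_⟩
  have H₃ := nmul_nadd_le ha.le H₂
  simp only [nmul_nadd] at H₃
  rw [← nadd_le_nadd_iff_right (a ⨳ e ♯ a' ⨳ e)]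
  convert nadd_le_nadd H₁ H₃ using 1 <;> ac_rfl

theorem nmul_assoc (a b c : Ordinal) : a ⨳ b ⨳ c = a ⨳ (b ⨳ c) := by
  induction a using WellFoundedLT.induction generalizing b c with | ind a IHa
  induction b using WellFoundedLT.induction generalizing c with | ind b IHb
  induction c using WellFoundedLT.induction with | ind c IHc
  apply le_antisymm
  · refine le_of_not_gt fun h => ?_
    obtain ⟨a', ha, b', hb, c', hc, H⟩ := lt_nmul_iff₃ h
    rw [IHa a' ha b c, IHa a' ha b' c', IHa a' ha b' c, IHa a' ha b c', IHb b' hb c,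
      IHb b' hb c', IHc c' hc] at H
    exact (H.trans_lt (nmul_nadd_lt₃' ha hb hc)).false
  · refine le_of_not_gt fun h => ?_
    obtain ⟨a', ha, b', hb, c', hc, H⟩ := lt_nmul_iff₃' h
    rw [← IHa a' ha b c, ← IHa a' ha b' c', ← IHa a' ha b' c, ← IHa a' ha b c', ← IHb b' hb c,
      ← IHb b' hb c', ← IHc c' hc] at H
    exact (H.trans_lt (nmul_nadd_lt₃ ha hb hc)).false

instance : Std.Commutative (α := Ordinal) (· ⨳ ·) := ⟨nmul_comm⟩
instance : Std.Associative (α := Ordinal) (· ⨳ ·) := ⟨nmul_assoc⟩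

theorem mul_le_nmul (a b : Ordinal) : a * b ≤ a ⨳ b := by
  induction b using WellFoundedLT.induction with | ind b IH
  rcases zero_or_succ_or_isSuccLimit b with rfl | ⟨b, rfl⟩ | hb
  · simp
  · rw [Order.succ_eq_add_one, mul_add_one, nmul_add_one]
    exact (add_le_add_left (IH b (Order.lt_succ b)) a).trans (add_le_nadd _ _)
  · exact (mul_le_iff_of_isSuccLimit hb).2 fun b' hb' =>
      (IH b' hb').trans (nmul_le_nmul_left hb'.le a)

/-! ### Powers of `ω` -/

theorem natCast_nadd_natCast (m n : ℕ) : (m : Ordinal) ♯ n = (m + n : ℕ) := by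
  induction n with
  | zero => simp
  | succ n IH => rw [Nat.cast_succ, ← Order.succ_eq_add_one, nadd_succ, IH]; rfl

theorem nadd_lt_omega0 {a b : Ordinal} (ha : a < ω) (hb : b < ω) : a ♯ b < ω := by
  obtain ⟨m, rfl⟩ := lt_omega0.1 ha
  obtain ⟨n, rfl⟩ := lt_omega0.1 hb
  rw [natCast_nadd_natCast]
  exact natCast_lt_omega0 _

theorem div_lt_or_of_lt_mul_add {b x s u : Ordinal} (hs : s < b) (hu : u < b * x + s) :
    u / b < x ∨ u / b = x ∧ u % b < s := by
  have hdiv : u / b ≤ x := (div_le (zero_le.trans_lt hs).ne').2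
    (hu.trans_le (by rw [mul_succ]; exact add_le_add_right hs.le _))
  refine hdiv.lt_or_eq.imp_right fun hx => ⟨hx, ?_⟩
  rwa [← div_add_mod u b, hx, add_lt_add_iff_left] at hu

theorem nadd_opow_mul_add_le {g : Ordinal} (hg : ∀ a < ω ^ g, ∀ b < ω ^ g, a ♯ b < ω ^ g)
    (x y : Ordinal) {s w : Ordinal} (hs : s < ω ^ g) (hw : w < ω ^ g) :
    (ω ^ g * x + s) ♯ (ω ^ g * y + w) ≤ ω ^ g * (x ♯ y) + (s ♯ w) := by
  have hg0 : ω ^ g ≠ 0 := (opow_pos g omega0_pos).ne'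
  induction x using WellFoundedLT.induction generalizing s y w with | ind x IHx
  induction s using WellFoundedLT.induction generalizing y w with | ind s IHs
  induction y using WellFoundedLT.induction generalizing w with | ind y IHy
  induction w using WellFoundedLT.induction with | ind w IHw
  have carry : ∀ z < x ♯ y, ∀ t < ω ^ g, ω ^ g * z + t < ω ^ g * (x ♯ y) + (s ♯ w) := by
    intro z hz t ht
    calc ω ^ g * z + t < ω ^ g * Order.succ z := by rw [mul_succ]; exact add_lt_add_right ht _
      _ ≤ ω ^ g * (x ♯ y) := mul_le_mul_right (Order.succ_le_of_lt hz) _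
      _ ≤ _ := le_self_add
  refine nadd_le_iff.2 ⟨fun u hu => ?_, fun v hv => ?_⟩
  · have hu' := div_add_mod u (ω ^ g)
    have hmod := mod_lt u hg0
    rcases div_lt_or_of_lt_mul_add hs hu with hlt | ⟨heq, hlt⟩
    · rw [← hu']
      exact (IHx _ hlt y hmod hw).trans_lt (carry _ (nadd_lt_nadd_right hlt y) _ (hg _ hmod _ hw))
    · rw [← hu', heq]
      exact (IHs _ hlt y hmod hw).trans_lt (add_lt_add_right (nadd_lt_nadd_right hlt w) _)
  · have hv' := div_add_mod v (ω ^ g)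
    have hmod := mod_lt v hg0
    rcases div_lt_or_of_lt_mul_add hw hv with hlt | ⟨heq, hlt⟩
    · rw [← hv']
      exact (IHy _ hlt hmod).trans_lt (carry _ (nadd_lt_nadd_left hlt x) _ (hg _ hs _ hmod))
    · rw [← hv', heq]
      exact (IHw _ hlt hmod).trans_lt (add_lt_add_right (nadd_lt_nadd_left hlt s) _)

theorem nadd_lt_opow {g a b : Ordinal} (ha : a < ω ^ g) (hb : b < ω ^ g) : a ♯ b < ω ^ g := by
  induction g using WellFoundedLT.induction generalizing a b with | ind g IH
  rcases eq_or_ne g 0 with rfl | hg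
  · rw [opow_zero, Order.lt_one_iff] at ha hb
    simp [ha, hb]
  set d := max (log ω a) (log ω b)
  have hd : d < g := max_lt (lt_log_of_lt_opow hg ha) (lt_log_of_lt_opow hg hb)
  have hpow : ω ^ d ≠ 0 := (opow_pos d omega0_pos).ne'
  have hdigit : ∀ c, log ω c ≤ d → c / ω ^ d < ω := fun c hc => by
    rw [← lt_mul_iff_div_lt hpow, ← opow_succ]
    exact (lt_opow_succ_log_self one_lt_omega0 c).trans_le
      (opow_le_opow_right omega0_pos (Order.succ_le_succ hc))
  have hlead : a / ω ^ d ♯ b / ω ^ d < ω :=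
    nadd_lt_omega0 (hdigit a (le_max_left _ _)) (hdigit b (le_max_right _ _))
  calc a ♯ b = (ω ^ d * (a / ω ^ d) + a % ω ^ d) ♯ (ω ^ d * (b / ω ^ d) + b % ω ^ d) := by
        rw [div_add_mod, div_add_mod]
    _ ≤ ω ^ d * (a / ω ^ d ♯ b / ω ^ d) + (a % ω ^ d ♯ b % ω ^ d) :=
        nadd_opow_mul_add_le (fun x hx y hy => IH d hd hx hy) _ _ (mod_lt _ hpow) (mod_lt _ hpow)
    _ < ω ^ d * Order.succ (a / ω ^ d ♯ b / ω ^ d) := by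
        rw [mul_succ]
        exact add_lt_add_right (IH d hd (mod_lt _ hpow) (mod_lt _ hpow)) _
    _ < ω ^ d * ω :=
        mul_lt_mul_of_pos_left (isSuccLimit_omega0.succ_lt hlead) (opow_pos d omega0_pos)
    _ ≤ ω ^ g := by
        rw [← opow_succ]
        exact opow_le_opow_right omega0_pos (Order.succ_le_of_lt hd)

theorem nmul_natCast_lt_opow {g a : Ordinal} (ha : a < ω ^ g) (k : ℕ) : a ⨳ k < ω ^ g := by
  induction k with
  | zero => simpa using opow_pos g omega0_pos
  | succ k IH => rw [Nat.cast_succ, nmul_add_one]; exact nadd_lt_opow IH ha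

theorem exists_lt_opow_nmul_natCast {g a : Ordinal} (hg : g ≠ 0) (ha : a < ω ^ g) :
    ∃ g' < g, ∃ k : ℕ, a < ω ^ g' ⨳ k := by
  have h : a < ω ^ log ω a * ω := by
    rw [← opow_succ]
    exact lt_opow_succ_log_self one_lt_omega0 a
  obtain ⟨k, hk, hak⟩ := (lt_mul_iff_of_isSuccLimit isSuccLimit_omega0).1 h
  obtain ⟨k, rfl⟩ := lt_omega0.1 hk
  exact ⟨log ω a, lt_log_of_lt_opow hg ha, k, hak.trans_le (mul_le_nmul _ _)⟩

theorem nmul_opow_lt_opow_nadd {e f a : Ordinal}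
    (IH : ∀ e' < e, ω ^ e' ⨳ ω ^ f = ω ^ (e' ♯ f)) (ha : a < ω ^ e) :
    a ⨳ ω ^ f < ω ^ (e ♯ f) := by
  rcases eq_or_ne e 0 with rfl | he
  · rw [opow_zero, Order.lt_one_iff] at ha
    simpa [ha] using opow_pos _ omega0_pos
  obtain ⟨e', he', k, hk⟩ := exists_lt_opow_nmul_natCast he ha
  calc a ⨳ ω ^ f ≤ ω ^ e' ⨳ k ⨳ ω ^ f := nmul_le_nmul_right hk.le _
    _ = ω ^ (e' ♯ f) ⨳ k := by rw [← IH e' he']; ac_rfl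
    _ < ω ^ (e ♯ f) := nmul_natCast_lt_opow
        ((opow_lt_opow_iff_right one_lt_omega0).2 (nadd_lt_nadd_right he' f)) k

theorem opow_nadd_nmul_natCast_lt {e f e' : Ordinal}
    (IH : ω ^ e' ⨳ ω ^ f = ω ^ (e' ♯ f)) (he' : e' < e) (k : ℕ) :
    ω ^ (e' ♯ f) ⨳ k < ω ^ e ⨳ ω ^ f := by
  calc ω ^ (e' ♯ f) ⨳ k = ω ^ e' ⨳ k ⨳ ω ^ f := by rw [← IH]; ac_rfl
    _ < ω ^ e ⨳ ω ^ f := nmul_lt_nmul_of_pos_right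
        (nmul_natCast_lt_opow ((opow_lt_opow_iff_right one_lt_omega0).2 he') k)
        (opow_pos f omega0_pos)

theorem opow_nmul_opow (e f : Ordinal) : ω ^ e ⨳ ω ^ f = ω ^ (e ♯ f) := by
  induction e using WellFoundedLT.induction generalizing f with | ind e IHe
  induction f using WellFoundedLT.induction with | ind f IHf
  have IHf' : ∀ f' < f, ω ^ f' ⨳ ω ^ e = ω ^ (f' ♯ e) := fun f' hf' => by
    rw [nmul_comm, nadd_comm, IHf f' hf']
  apply le_antisymm
  · refine nmul_le_iff.2 fun a ha b hb => lt_of_lt_of_le ?_ le_self_nadd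
    refine nadd_lt_opow (nmul_opow_lt_opow_nadd (fun e' he' => IHe e' he' f) ha) ?_
    rw [nmul_comm, nadd_comm]
    exact nmul_opow_lt_opow_nadd IHf' hb
  · refine le_of_forall_lt fun z hz => ?_
    rcases eq_or_ne (e ♯ f) 0 with h0 | h0
    · rw [h0, opow_zero, Order.lt_one_iff] at hz
      exact hz ▸ nmul_pos (opow_pos e omega0_pos) (opow_pos f omega0_pos)
    obtain ⟨h, hh, k, hk⟩ := exists_lt_opow_nmul_natCast h0 hz
    rcases lt_nadd_iff.1 hh with ⟨e', he', hle⟩ | ⟨f', hf', hle⟩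
    · calc z < ω ^ h ⨳ k := hk
        _ ≤ ω ^ (e' ♯ f) ⨳ k := nmul_le_nmul_right (opow_le_opow_right omega0_pos hle) _
        _ < ω ^ e ⨳ ω ^ f := opow_nadd_nmul_natCast_lt (IHe e' he' f) he' k
    · calc z < ω ^ h ⨳ k := hk
        _ ≤ ω ^ (f' ♯ e) ⨳ k :=
            nmul_le_nmul_right (opow_le_opow_right omega0_pos (nadd_comm e f' ▸ hle)) _
        _ < ω ^ f ⨳ ω ^ e := opow_nadd_nmul_natCast_lt (IHf' f' hf') hf' k
        _ = ω ^ e ⨳ ω ^ f := nmul_comm _ _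

theorem nadd_eq_add_of_le {x y : Ordinal} (h : x ♯ y ≤ x + y) : x ♯ y = x + y :=
  h.antisymm (add_le_nadd x y)

-- With `δ = ω ^ L * q + r` and `r < ω ^ L`, take `x = ω ^ L * q` if `r ≠ 0`, else
-- `x = ω ^ L * (q - 1)`.
theorem exists_nadd_sub_eq_of_ne_opow {δ : Ordinal} (hδ : δ ≠ 0)
    (hpow : ∀ e : Ordinal, δ ≠ ω ^ e) : ∃ x, 0 < x ∧ x < δ ∧ x ♯ (δ - x) = δ := by
  obtain ⟨q, hq⟩ := lt_omega0.1 (div_opow_log_lt δ one_lt_omega0)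
  have hδq := div_add_mod δ (ω ^ log ω δ)
  have hr := mod_lt δ (opow_pos (log ω δ) omega0_pos).ne'
  have hle := opow_log_le_self ω hδ
  rw [hq] at hδq
  generalize log ω δ = L at *
  generalize δ % ω ^ L = r at *
  subst hδq
  clear hq hδ
  have hL : 0 < ω ^ L := opow_pos L omega0_pos
  have closed : ∀ a < ω ^ L, ∀ b < ω ^ L, a ♯ b < ω ^ L := fun a ha b hb => nadd_lt_opow ha hb
  have hq0 : q ≠ 0 := by
    rintro rfl
    exact (hle.trans_lt (by simpa using hr)).false
  rcases eq_or_ne r 0 with rfl | hr0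
  · obtain ⟨n, rfl⟩ := Nat.exists_eq_succ_of_ne_zero hq0
    have hn : n ≠ 0 := by
      rintro rfl
      exact hpow L (by simp)
    have hδn : ω ^ L * (n.succ : Ordinal) + 0 = ω ^ L * n + ω ^ L := by
      rw [add_zero, Nat.cast_succ, mul_add_one]
    rw [hδn]
    refine ⟨ω ^ L * n, mul_pos hL (by exact_mod_cast Nat.pos_of_ne_zero hn),
      lt_add_of_pos_right _ hL, ?_⟩
    rw [Ordinal.add_sub_cancel]
    refine nadd_eq_add_of_le ?_
    simpa [nadd_one, mul_add_one] using nadd_opow_mul_add_le closed n 1 hL hL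
  · refine ⟨ω ^ L * q, mul_pos hL (by exact_mod_cast Nat.pos_of_ne_zero hq0),
      lt_add_of_pos_right _ (pos_iff_ne_zero.2 hr0), ?_⟩
    rw [Ordinal.add_sub_cancel]
    refine nadd_eq_add_of_le ?_
    simpa using nadd_opow_mul_add_le closed q 0 hL hr

end Ordinal

/-! ### Natural sums and products over a finset -/

namespace Finset

open Ordinal

variable {ι : Type*}

noncomputable def nsum (s : Finset ι) (f : ι → Ordinal) : Ordinal :=
  s.fold (· ♯ ·) 0 f

noncomputable def nprod (s : Finset ι) (f : ι → Ordinal) : Ordinal :=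
  s.fold (· ⨳ ·) 1 f

@[simp]
theorem nsum_empty (f : ι → Ordinal) : (∅ : Finset ι).nsum f = 0 := fold_empty

@[simp]
theorem nprod_empty (f : ι → Ordinal) : (∅ : Finset ι).nprod f = 1 := fold_empty

variable [DecidableEq ι]

theorem nsum_insert {s : Finset ι} {c : ι} (hc : c ∉ s) (f : ι → Ordinal) :
    (insert c s).nsum f = f c ♯ s.nsum f :=
  fold_insert hc

theorem nprod_insert {s : Finset ι} {c : ι} (hc : c ∉ s) (f : ι → Ordinal) :
    (insert c s).nprod f = f c ⨳ s.nprod f :=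
  fold_insert hc

theorem nsum_le_nsum {s : Finset ι} {f g : ι → Ordinal} (h : ∀ c ∈ s, f c ≤ g c) :
    s.nsum f ≤ s.nsum g := by
  induction s using Finset.induction with
  | empty => simp
  | insert c s hc IH =>
    rw [nsum_insert hc, nsum_insert hc]
    exact nadd_le_nadd (h c (mem_insert_self c s)) (IH fun i hi => h i (mem_insert_of_mem hi))

theorem nsum_lt_opow {s : Finset ι} {f : ι → Ordinal} {g : Ordinal}
    (h : ∀ c ∈ s, f c < ω ^ g) : s.nsum f < ω ^ g := by
  induction s using Finset.induction with
  | empty => simpa using opow_pos g omega0_pos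
  | insert c s hc IH =>
    rw [nsum_insert hc]
    exact nadd_lt_opow (h c (mem_insert_self c s)) (IH fun i hi => h i (mem_insert_of_mem hi))

theorem nprod_opow (s : Finset ι) (E : ι → Ordinal) :
    s.nprod (fun i => ω ^ E i) = ω ^ s.nsum E := by
  induction s using Finset.induction with
  | empty => simp
  | insert c s hc IH => rw [nprod_insert hc, nsum_insert hc, IH, opow_nmul_opow]

theorem nprod_pos {s : Finset ι} {f : ι → Ordinal} (h : ∀ i ∈ s, 0 < f i) : 0 < s.nprod f := by
  induction s using Finset.induction with
  | empty => simp
  | insert c s hc IH =>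
    rw [nprod_insert hc]
    exact nmul_pos (h c (mem_insert_self c s)) (IH fun i hi => h i (mem_insert_of_mem hi))

theorem nprod_update_of_mem {s : Finset ι} {c : ι} (hc : c ∈ s) (f : ι → Ordinal) (y : Ordinal) :
    s.nprod (Function.update f c y) = y ⨳ (s.erase c).nprod f := by
  rw [← insert_erase hc, nprod_insert (notMem_erase c s), erase_insert (notMem_erase c s),
    Function.update_self]
  exact congrArg _ (fold_congr fun i hi => Function.update_of_ne (ne_of_mem_erase hi) _ _)

theorem nprod_update_lt {s : Finset ι} {f : ι → Ordinal} (hf : ∀ i ∈ s, 0 < f i) {c : ι}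
    (hc : c ∈ s) {y : Ordinal} (hy : y < f c) : s.nprod (Function.update f c y) < s.nprod f := by
  conv_rhs => rw [← Function.update_eq_self c f]
  rw [nprod_update_of_mem hc, nprod_update_of_mem hc]
  exact nmul_lt_nmul_of_pos_right hy (nprod_pos fun i hi => hf i (mem_of_mem_erase hi))

theorem nprod_update_nadd {s : Finset ι} {c : ι} (hc : c ∈ s) (f : ι → Ordinal) (x y : Ordinal) :
    s.nprod (Function.update f c x) ♯ s.nprod (Function.update f c y) =
      s.nprod (Function.update f c (x ♯ y)) := by
  rw [nprod_update_of_mem hc, nprod_update_of_mem hc, nprod_update_of_mem hc, nadd_nmul]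

end Finset

theorem Fin.univ_nprod_eq_foldr {m : ℕ} (f : Fin m → Ordinal) :
    Finset.univ.nprod f = (List.ofFn f).foldr (· ⨳ ·) 1 := by
  rw [Finset.nprod, Finset.fold, Fin.univ_val_map, Multiset.coe_fold_r]

theorem Fin.univ_nprod_snoc {m : ℕ} (γ : Fin m → Ordinal) (b : Ordinal) :
    Finset.univ.nprod (Fin.snoc γ b : Fin (m + 1) → Ordinal) = (List.ofFn γ).foldr (· ⨳ ·) b := by
  rw [Fin.univ_nprod_eq_foldr, List.ofFn_succ', List.concat_eq_append, List.foldr_append]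
  simp

/-! ### Ranks of subsets -/

section Rank

open Set Ordinal

variable {W V : Type u} [PartialOrder W] [WellFoundedLT W] [PartialOrder V] [WellFoundedLT V]

theorem elRank_lt_elRank {x y : W} (h : x < y) : elRank x < elRank y :=
  IsWellFounded.rank_lt_of_rel h

theorem elRank_le_elRank {x y : W} (h : x ≤ y) : elRank x ≤ elRank y :=
  h.lt_or_eq.elim (fun h => (elRank_lt_elRank h).le) (fun h => h ▸ le_rfl)

theorem elRank_eq_iSup (w : W) : elRank w = ⨆ y : Iio w, elRank (y : W) + 1 := by
  rw [elRank, IsWellFounded.rank_eq]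
  simp only [Order.succ_eq_add_one]
  rfl

theorem elRank_lt_ordRank (x : W) : elRank x < ordRank W :=
  (Order.lt_add_one_iff.2 le_rfl).trans_le (Ordinal.le_iSup (fun p : W => elRank p + 1) x)

theorem ordRank_le_iff {a : Ordinal} : ordRank W ≤ a ↔ ∀ p : W, elRank p < a := by
  simp [ordRank, Ordinal.iSup_le_iff, Order.add_one_le_iff]

theorem elRank_le_of_strictMono {f : W → Ordinal} (hf : StrictMono f) (p : W) :
    elRank p ≤ f p := by
  induction p using WellFoundedLT.induction with | ind p IH
  rw [elRank_eq_iSup]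
  exact Ordinal.iSup_le fun y => Order.add_one_le_iff.2 ((IH y y.2).trans_lt (hf y.2))

theorem elRank_apply_of_isLowerSet_range (f : V ↪o W) (hf : IsLowerSet (range f)) (x : V) :
    elRank (f x) = elRank x := by
  induction x using WellFoundedLT.induction with | ind x IH
  rw [elRank_eq_iSup, elRank_eq_iSup]
  apply le_antisymm
  · refine Ordinal.iSup_le fun y => ?_
    obtain ⟨v, hv⟩ := hf y.2.le (mem_range_self x)
    have hvx : v < x := f.lt_iff_lt.1 (hv ▸ y.2)
    rw [← hv, IH v hvx]
    exact Ordinal.le_iSup (fun y : Iio x => elRank (y : V) + 1) ⟨v, hvx⟩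
  · refine Ordinal.iSup_le fun y => ?_
    rw [← IH y y.2]
    exact Ordinal.le_iSup (fun y : Iio (f x) => elRank (y : W) + 1) ⟨f y, f.lt_iff_lt.2 y.2⟩

theorem ordRank_congr (e : V ≃o W) : ordRank V = ordRank W := by
  rw [ordRank, ordRank, ← e.toEquiv.iSup_comp]
  refine iSup_congr fun x => ?_
  rw [← elRank_apply_of_isLowerSet_range e.toOrderEmbedding (by simpa using isLowerSet_univ)]
  rfl

theorem ordRank_Iio (w : W) : ordRank (Iio w) = elRank w := by
  rw [ordRank, elRank_eq_iSup]
  refine iSup_congr fun y => ?_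
  rw [← elRank_apply_of_isLowerSet_range (OrderEmbedding.subtype _) ?_ y]
  · rfl
  · convert isLowerSet_Iio w
    exact Subtype.range_coe

theorem ordRank_inter_Iio {S : Set W} {w : W} (hw : w ∈ S) :
    ordRank ↥(S ∩ Iio w) = elRank (⟨w, hw⟩ : S) := by
  rw [← ordRank_Iio]
  exact ordRank_congr
    { toFun := fun y => ⟨⟨y, y.2.1⟩, y.2.2⟩
      invFun := fun y => ⟨y.1, y.1.2, y.2⟩
      left_inv := fun _ => rfl
      right_inv := fun _ => rfl
      map_rel_iff' := Iff.rfl }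

theorem ordRank_le_iff_inter_Iio {S : Set W} {a : Ordinal} :
    ordRank S ≤ a ↔ ∀ w ∈ S, ordRank ↥(S ∩ Iio w) < a := by
  rw [ordRank_le_iff, Subtype.forall]
  exact forall₂_congr fun w hw => by rw [ordRank_inter_Iio hw]

theorem ordRank_inter_Iio_lt {S : Set W} {w : W} (hw : w ∈ S) :
    ordRank ↥(S ∩ Iio w) < ordRank S :=
  ordRank_inter_Iio hw ▸ elRank_lt_ordRank _

theorem ordRank_mono {S T : Set W} (h : S ⊆ T) : ordRank S ≤ ordRank T :=
  ordRank_le_iff.2 fun x => (elRank_le_of_strictMono (f := fun x => elRank (inclusion h x))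
    (fun _ _ hxy => elRank_lt_elRank hxy) x).trans_lt (elRank_lt_ordRank _)

theorem ordRank_inter_Iio_mono (K : Set W) {x y : W} (hxy : x ≤ y) :
    ordRank ↥(K ∩ Iio x) ≤ ordRank ↥(K ∩ Iio y) :=
  ordRank_mono fun _ hz => ⟨hz.1, hz.2.trans_le hxy⟩

theorem ordRank_inter_Iio_lt_of_lt {K : Set W} {x y : W} (hx : x ∈ K) (hxy : x < y) :
    ordRank ↥(K ∩ Iio x) < ordRank ↥(K ∩ Iio y) := by
  have h : K ∩ Iio x = (K ∩ Iio y) ∩ Iio x := by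
    ext z
    exact ⟨fun hz => ⟨⟨hz.1, hz.2.trans hxy⟩, hz.2⟩, fun hz => ⟨hz.1.1, hz.2⟩⟩
  rw [h]
  exact ordRank_inter_Iio_lt ⟨hx, hxy⟩

theorem ordRank_le_nadd_of_subset_union {S A B : Set W} (h : S ⊆ A ∪ B) :
    ordRank S ≤ ordRank A ♯ ordRank B := by
  set f : S → Ordinal := fun x => ordRank ↥(A ∩ Iio (x : W)) ♯ ordRank ↥(B ∩ Iio (x : W))
  have hf : StrictMono f := fun x y hxy => by
    rcases h x.2 with hA | hB
    · exact nadd_lt_nadd_of_lt_of_le (ordRank_inter_Iio_lt_of_lt hA hxy)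
        (ordRank_inter_Iio_mono B hxy.le)
    · exact nadd_lt_nadd_of_le_of_lt (ordRank_inter_Iio_mono A hxy.le)
        (ordRank_inter_Iio_lt_of_lt hB hxy)
  refine ordRank_le_iff.2 fun x => (elRank_le_of_strictMono hf x).trans_lt ?_
  rcases h x.2 with hA | hB
  · exact nadd_lt_nadd_of_lt_of_le (ordRank_inter_Iio_lt hA) (ordRank_mono inter_subset_left)
  · exact nadd_lt_nadd_of_le_of_lt (ordRank_mono inter_subset_left) (ordRank_inter_Iio_lt hB)

theorem ordRank_le_nsum_of_subset_biUnion {ι : Type*} [DecidableEq ι] {S : Set W}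
    (s : Finset ι) (K : ι → Set W) (h : S ⊆ ⋃ c ∈ s, K c) :
    ordRank S ≤ s.nsum fun c => ordRank (K c) := by
  induction s using Finset.induction generalizing S with
  | empty => exact ordRank_le_iff.2 fun x => by simpa using h x.2
  | insert c s hc IH =>
    rw [Finset.nsum_insert hc]
    refine (ordRank_le_nadd_of_subset_union (B := ⋃ c ∈ s, K c) ?_).trans
      (nadd_le_nadd_left (IH subset_rfl) _)
    simpa using h

end Rank

/-! ### Labellings by tuples of ordinals -/

theorem Ordinal.sub_lt_sub_right_of_lt {a b x : Ordinal} (h : a < b) (hx : x < b) :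
    a - x < b - x := by
  rcases le_or_gt x a with hxa | hax
  · rwa [Ordinal.sub_lt_of_le hxa, Ordinal.add_sub_cancel_of_le (hxa.trans h.le)]
  · rw [Ordinal.sub_eq_zero_iff_le.2 hax.le, Ordinal.lt_sub, add_zero]
    exact hx

theorem Function.update_sub_lt_update_sub {ι : Type*} [DecidableEq ι] {f g : ι → Ordinal}
    {c i : ι} {x : Ordinal} (h : f i < g i) (hx : x ≤ f c ∨ x < g c) :
    update f c (f c - x) i < update g c (g c - x) i := by
  rcases eq_or_ne i c with rfl | hi
  · simp only [update_self]
    exact Ordinal.sub_lt_sub_right_of_lt h (hx.elim (·.trans_lt h) id)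
  · simpa only [update_of_ne hi] using h

section Labelling

open Set Ordinal Finset Function

variable {W : Type u} [PartialOrder W] {m : ℕ}

def IsLabelling (S : Set W) (δ : Fin m → Ordinal.{u}) (t : W → Fin m → Ordinal.{u}) : Prop :=
  (∀ w ∈ S, ∀ i, t w i < δ i) ∧ ∀ w ∈ S, ∀ w' ∈ S, w < w' → ∃ i, t w i < t w' i

variable {S : Set W} {δ τ : Fin m → Ordinal.{u}} {t : W → Fin m → Ordinal.{u}}

namespace IsLabelling

theorem mono (ht : IsLabelling S δ t) {T : Set W} (hT : T ⊆ S) : IsLabelling T δ t :=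
  ⟨fun w hw => ht.1 w (hT hw), fun w hw w' hw' => ht.2 w (hT hw) w' (hT hw')⟩

theorem inter_setOf_lt (ht : IsLabelling S δ t) (c : Fin m) (x : Ordinal) :
    IsLabelling (S ∩ {w | t w c < x}) (update δ c x) t := by
  refine ⟨fun w hw i => ?_, (ht.mono inter_subset_left).2⟩
  rcases eq_or_ne i c with rfl | hi
  · simpa using hw.2
  · simpa [hi] using ht.1 w hw.1 i

theorem inter_setOf_le_sub (ht : IsLabelling S δ t) (c : Fin m) (x : Ordinal) :
    IsLabelling (S ∩ {w | x ≤ t w c}) (update δ c (δ c - x))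
      (fun w => update (t w) c (t w c - x)) := by
  refine ⟨fun w hw i => update_sub_lt_update_sub (ht.1 w hw.1 i) (.inl hw.2),
    fun w hw w' hw' hww' => ?_⟩
  obtain ⟨i, hi⟩ := ht.2 w hw.1 w' hw'.1 hww'
  exact ⟨i, update_sub_lt_update_sub hi (.inl hw.2)⟩

end IsLabelling

variable [WellFoundedLT W]

theorem ordRank_lt_nprod_of_split {c : Fin m} {x : Ordinal} (f : W → Ordinal)
    (hx : x ♯ (δ c - x) = δ c)
    (hlow : ordRank ↥(S ∩ {w | f w < x}) ≤ univ.nprod (update δ c x))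
    (hup : ordRank ↥(S ∩ {w | x ≤ f w}) < univ.nprod (update δ c (δ c - x))) :
    ordRank S < univ.nprod δ :=
  calc ordRank S ≤ ordRank ↥(S ∩ {w | f w < x}) ♯ ordRank ↥(S ∩ {w | x ≤ f w}) :=
        ordRank_le_nadd_of_subset_union fun w hw => (lt_or_ge (f w) x).imp (⟨hw, ·⟩) (⟨hw, ·⟩)
    _ < univ.nprod (update δ c x) ♯ univ.nprod (update δ c (δ c - x)) :=
        nadd_lt_nadd_of_le_of_lt hlow hup
    _ = univ.nprod δ := by rw [nprod_update_nadd (mem_univ c), hx, update_eq_self]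

theorem ordRank_lt_nprod_opow {E : Fin m → Ordinal.{u}} (hτ : ∀ i, τ i < ω ^ E i)
    (hpt : ∀ w ∈ S, ∃ i, t w i < τ i)
    (hK : ∀ c, ordRank ↥(S ∩ {w | t w c < τ c}) ≤
      univ.nprod (update (fun i => ω ^ E i) c (τ c))) :
    ordRank S < univ.nprod fun i => ω ^ E i := by
  rw [nprod_opow]
  calc ordRank S ≤ univ.nsum fun c => ordRank ↥(S ∩ {w | t w c < τ c}) :=
        ordRank_le_nsum_of_subset_biUnion _ _ fun w hw => by
          obtain ⟨i, hi⟩ := hpt w hw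
          exact mem_biUnion (mem_univ i) ⟨hw, hi⟩
    _ ≤ univ.nsum fun c => univ.nprod (update (fun i => ω ^ E i) c (τ c)) :=
        nsum_le_nsum fun c _ => hK c
    _ < ω ^ univ.nsum E := nsum_lt_opow fun c _ => by
        rw [← nprod_opow]
        exact nprod_update_lt (fun i _ => opow_pos _ omega0_pos) (mem_univ c) (hτ c)

namespace IsLabelling

theorem ordRank_le_nprod_of_forall (ht : IsLabelling S δ t)
    (H : ∀ T ⊆ S, ∀ τ : Fin m → Ordinal.{u}, (∀ i, τ i < δ i) → (∀ w ∈ T, ∃ i, t w i < τ i) →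
      ordRank T < univ.nprod δ) :
    ordRank S ≤ univ.nprod δ :=
  ordRank_le_iff_inter_Iio.2 fun w hw =>
    H _ inter_subset_left _ (ht.1 w hw) fun y hy => ht.2 y hy.1 w hw hy.2

theorem ordRank_lt_nprod (ht : IsLabelling S δ t) (hτ : ∀ i, τ i < δ i)
    (hpt : ∀ w ∈ S, ∃ i, t w i < τ i) : ordRank S < univ.nprod δ := by
  induction hv : Finset.univ.nprod δ using WellFoundedLT.induction generalizing S δ τ t with
    | ind v IH
  subst hv
  have hδ : ∀ i ∈ Finset.univ, 0 < δ i := fun i _ => zero_le.trans_lt (hτ i)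
  have ih_le : ∀ {T : Set W} {δ' : Fin m → Ordinal.{u}} {t' : W → Fin m → Ordinal.{u}},
      univ.nprod δ' < univ.nprod δ → IsLabelling T δ' t' → ordRank T ≤ univ.nprod δ' :=
    fun hδ' ht' => ht'.ordRank_le_nprod_of_forall fun _ hT _ hτ' hpt' =>
      IH _ hδ' (ht'.mono hT) hτ' hpt' rfl
  by_cases hsplit : ∃ c x, 0 < x ∧ x < δ c ∧ x ♯ (δ c - x) = δ c
  · obtain ⟨c, x, hx0, hxδ, hx⟩ := hsplit
    refine ordRank_lt_nprod_of_split (fun w => t w c) hx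
      (ih_le (nprod_update_lt hδ (mem_univ c) hxδ) (ht.inter_setOf_lt c x)) ?_
    refine IH _ (nprod_update_lt hδ (mem_univ c) ?_) (ht.inter_setOf_le_sub c x)
      (τ := update τ c (τ c - x)) (fun i => update_sub_lt_update_sub (hτ i) (.inr hxδ))
      (fun w hw => ?_) rfl
    · simpa [hx] using lt_nadd_of_pos_left (b := δ c - x) hx0
    · obtain ⟨i, hi⟩ := hpt w hw.1
      exact ⟨i, update_sub_lt_update_sub hi (.inl hw.2)⟩
  · have hpow : ∀ c, ∃ e : Ordinal, δ c = ω ^ e := fun c => by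
      by_contra! h
      obtain ⟨x, hx0, hxδ, hx⟩ := exists_nadd_sub_eq_of_ne_opow (hδ c (mem_univ c)).ne' h
      exact hsplit ⟨c, x, hx0, hxδ, hx⟩
    choose E hE using hpow
    obtain rfl : δ = fun i => ω ^ E i := funext hE
    exact ordRank_lt_nprod_opow hτ hpt fun c =>
      ih_le (nprod_update_lt hδ (mem_univ c) (hτ c)) (ht.inter_setOf_lt c (τ c))

theorem ordRank_le_nprod (ht : IsLabelling S δ t) : ordRank S ≤ univ.nprod δ :=
  ht.ordRank_le_nprod_of_forall fun _ hT _ hτ hpt => (ht.mono hT).ordRank_lt_nprod hτ hpt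

theorem elRank_lt_nprod (ht : IsLabelling S δ t) (hS : IsLowerSet S) {p : W} (hp : p ∈ S) :
    elRank p < univ.nprod δ := by
  rw [← ordRank_Iio]
  exact (ht.mono fun y hy => hS (le_of_lt hy) hp).ordRank_lt_nprod (ht.1 p hp)
    fun y hy => ht.2 y (hS (le_of_lt hy) hp) p hp hy

end IsLabelling

end Labelling

/-! ### Box-augmentations and maximal branching free intervals -/

theorem monotone_of_monotone_update {ι : Type*} [Fintype ι] [DecidableEq ι] {α : ι → Type*}
    [∀ i, Preorder (α i)] {β : Type*} [Preorder β] {f : (∀ i, α i) → β}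
    (hf : ∀ d k, Monotone fun e => f (Function.update d k e)) : Monotone f := by
  intro c c' hcc'
  suffices ∀ s : Finset ι, f c ≤ f (s.piecewise c' c) by simpa using this Finset.univ
  intro s
  induction s using Finset.induction with
  | empty => simp
  | insert k s hk IH =>
    rw [Finset.piecewise_insert]
    refine IH.trans ?_
    conv_lhs => rw [← Function.update_eq_self k (s.piecewise c' c)]
    exact hf _ k (by simpa [Finset.piecewise_eq_of_notMem _ _ _ hk] using hcc' k)

theorem UpwardsLinear.le_total_of_le {P : Type u} [PartialOrder P] (hP : UpwardsLinear P)
    {p a b : P} (ha : p ≤ a) (hb : p ≤ b) : a ≤ b ∨ b ≤ a := by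
  rcases ha.lt_or_eq with ha | rfl
  · rcases hb.lt_or_eq with hb | rfl
    · exact hP p a b ha hb
    · exact .inr ha.le
  · exact .inl hb

-- Otherwise `[q, w⁺)`, with `w⁺` the least element of `Q ∪ {∞}` above `w`, would be a larger
-- branching free interval.
theorem MaxBranchingFree.exists_lt_not_le_not_le {Q : Type u} [PartialOrder Q] [WellFoundedLT Q]
    (hQ : UpwardsLinear Q) {q : Q} {q' : WithTop Q} (hmax : MaxBranchingFree q q') {w : Q}
    (hqw : q ≤ w) (hw : ¬ (w : WithTop Q) < q') : ∃ x < w, ¬ x ≤ q ∧ ¬ q ≤ x := by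
  by_contra! h
  obtain ⟨w', hww', hmin⟩ := wellFounded_lt.has_min {s : WithTop Q | (w : WithTop Q) < s}
    ⟨⊤, WithTop.coe_lt_top w⟩
  have hle : ∀ p ∈ Ival q w', p ≤ w := fun p hp => by
    rcases hQ.le_total_of_le hp.1 hqw with hpw | hwp
    · exact hpw
    · rcases hwp.lt_or_eq with hwp | rfl
      · exact absurd hp.2 (hmin _ (WithTop.coe_lt_coe.2 hwp))
      · exact le_rfl
  have hBF : BranchingFree q w' := fun p hp x hxp => by
    by_cases hxq : x ≤ q
    · exact .inl hxq
    · exact .inr (h x (hxp.trans_le (hle p hp)) hxq)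
  have hsub : Ival q q' ⊆ Ival q w' := fun z hz => by
    refine ⟨hz.1, ?_⟩
    rcases hQ.le_total_of_le hz.1 hqw with hzw | hwz
    · exact (WithTop.coe_le_coe.2 hzw).trans_lt hww'
    · exact absurd ((WithTop.coe_le_coe.2 hwz).trans_lt hz.2) hw
  have hmem : w ∈ Ival q w' := ⟨hqw, hww'⟩
  rw [← hmax.2.2 q w' ((WithTop.coe_le_coe.2 hqw).trans hww'.le) hBF hsub] at hmem
  exact hw hmem.2

namespace IsBoxAugmentationWith

variable {n : ℕ} {P Q : Type u} [PartialOrder P] [PartialOrder Q]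
  {C : Fin n → Type u} [∀ i, LinearOrder (C i)] {η : ((∀ i, C i) × Q) ≃ P}

theorem monotone (hbox : IsBoxAugmentationWith P C Q η) : Monotone η := by
  rintro ⟨c, r⟩ ⟨c', r'⟩ ⟨hc, hr⟩
  refine le_trans ?_ ((hbox.2 c' r r').1 hr)
  exact monotone_of_monotone_update (f := fun c => η (c, r))
    (fun d k e e' he => (hbox.1 k d r e e').1 he) hc

theorem strictMono (hbox : IsBoxAugmentationWith P C Q η) : StrictMono η :=
  hbox.monotone.strictMono_of_injective η.injective

theorem not_lt_of_not_le_of_not_le (hP : UpwardsLinear P) (hbox : IsBoxAugmentationWith P C Q η)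
    {c c' : ∀ i, C i} {r r' : Q} (h : ¬ r' ≤ r) (h' : ¬ r ≤ r') : ¬ η (c', r') < η (c, r) := by
  intro hlt
  have h₁ : η (c', r') ≤ η (c ⊔ c', r') := hbox.monotone ⟨le_sup_right, le_rfl⟩
  have h₂ : η (c', r') ≤ η (c ⊔ c', r) := hlt.le.trans (hbox.monotone ⟨le_sup_left, le_rfl⟩)
  rcases hP.le_total_of_le h₁ h₂ with hr | hr
  · exact h ((hbox.2 _ r' r).2 hr)
  · exact h' ((hbox.2 _ r r').2 hr)

theorem lt_or_exists_lt_of_lt (hP : UpwardsLinear P) (hbox : IsBoxAugmentationWith P C Q η)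
    {c c' : ∀ i, C i} {r r' : Q} (hlt : η (c', r') < η (c, r)) :
    r' < r ∨ r ≤ r' ∧ ∃ k, c' k < c k := by
  by_cases hr : r ≤ r'
  · refine .inr ⟨hr, ?_⟩
    by_contra! h
    exact (hbox.monotone ⟨fun k => h k, hr⟩).not_gt hlt
  · refine .inl (lt_of_le_of_ne ?_ fun h => hr h.ge)
    by_contra h
    exact not_lt_of_not_le_of_not_le hP hbox h hr hlt

theorem snd_symm_lt_of_lt_of_forall_le (hP : UpwardsLinear P)
    (hbox : IsBoxAugmentationWith P C Q η) {z : ∀ i, C i} (hz : ∀ i x, z i ≤ x) {q : Q} {y : P}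
    (hy : y < η (z, q)) : (η.symm y).2 < q := by
  obtain ⟨⟨c, r⟩, rfl⟩ := η.surjective y
  rw [Equiv.symm_apply_apply]
  rcases hbox.lt_or_exists_lt_of_lt hP hy with hr | ⟨-, k, hk⟩
  · exact hr
  · exact absurd (hz k (c k)) hk.not_ge

theorem snd_symm_mem_of_lt [WellFoundedLT Q] (hP : UpwardsLinear P) (hQ : UpwardsLinear Q)
    (hbox : IsBoxAugmentationWith P C Q η) {q : Q} {q' : WithTop Q} (hmax : MaxBranchingFree q q')
    {qh : Q} (hqh : qh ∈ Ival q q') {c : ∀ i, C i} {y : P} (hy : y < η (c, qh)) :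
    (η.symm y).2 ∈ Set.Iic q ∪ Ival q q' := by
  obtain ⟨⟨c', r⟩, rfl⟩ := η.surjective y
  rw [Equiv.symm_apply_apply]
  rcases hbox.lt_or_exists_lt_of_lt hP hy with hr | ⟨hr, -⟩
  · rcases hmax.2.1 qh hqh r hr with h | h
    · exact .inl h
    · exact .inr ⟨h, (WithTop.coe_lt_coe.2 hr).trans hqh.2⟩
  · refine .inr ⟨hqh.1.trans hr, ?_⟩
    by_contra hr'
    obtain ⟨x, hxr, hxq, hqx⟩ := hmax.exists_lt_not_le_not_le hQ (hqh.1.trans hr) hr'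
    have hxqh : ¬ x ≤ qh := fun h => by
      rcases h.lt_or_eq with h | rfl
      · exact (hmax.2.1 qh hqh x h).elim hxq hqx
      · exact hqx hqh.1
    have hlt : η (c', x) < η (c', r) := hbox.strictMono (Prod.mk_lt_mk_of_le_of_lt le_rfl hxr)
    exact hbox.not_lt_of_not_le_of_not_le hP hxqh (fun h => hqx (hqh.1.trans h)) (hlt.trans hy)

theorem isLabelling [∀ i, WellFoundedLT (C i)] (hP : UpwardsLinear P)
    (hbox : IsBoxAugmentationWith P C Q η) {S : Set P} {T : Set Q} {φ : Q → Ordinal.{u}}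
    {β : Ordinal.{u}} (hφ : StrictMonoOn φ T) (hφβ : ∀ r ∈ T, φ r < β)
    (hST : ∀ y ∈ S, (η.symm y).2 ∈ T) :
    IsLabelling S (Fin.snoc (fun i => ordRank (C i)) β)
      (fun y => Fin.snoc (fun i => elRank ((η.symm y).1 i)) (φ (η.symm y).2)) := by
  refine ⟨fun y hy i => ?_, fun y hy y' hy' hyy' => ?_⟩
  · refine Fin.lastCases ?_ (fun j => ?_) i
    · simpa using hφβ _ (hST y hy)
    · simpa using elRank_lt_ordRank _
  · have h : η ((η.symm y).1, (η.symm y).2) < η ((η.symm y').1, (η.symm y').2) := by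
      simpa using hyy'
    rcases hbox.lt_or_exists_lt_of_lt hP h with hr | ⟨-, k, hk⟩
    · exact ⟨Fin.last n, by simpa using hφ (hST y hy) (hST y' hy') hr⟩
    · exact ⟨k.castSucc, by simpa using elRank_lt_elRank hk⟩

end IsBoxAugmentationWith

-- `φ` measures `Iic q ∪ I` as the ordinal sum of `Iio q` and `I`.
theorem exists_strictMonoOn_Iic_union {Q : Type u} [PartialOrder Q] [WellFoundedLT Q] {q : Q}
    {I : Set Q} (hq : q ∈ I) (hI : ∀ r ∈ I, q ≤ r) :
    ∃ φ : Q → Ordinal.{u}, StrictMonoOn φ (Set.Iic q ∪ I) ∧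
      ∀ r ∈ Set.Iic q ∪ I, φ r < elRank q + ordRank I := by
  classical
  refine ⟨fun r => if h : r ∈ I then elRank q + elRank (⟨r, h⟩ : I) else elRank r,
    fun r₁ h₁ r₂ h₂ hlt => ?_, fun r hr => ?_⟩
  · by_cases hr₁ : r₁ ∈ I <;> by_cases hr₂ : r₂ ∈ I <;>
      simp only [hr₁, hr₂, dite_true, dite_false]
    · exact add_lt_add_right (elRank_lt_elRank (show (⟨r₁, hr₁⟩ : I) < ⟨r₂, hr₂⟩ from hlt)) _
    · exact absurd ((hI r₁ hr₁).trans_lt (hlt.trans_le (h₂.resolve_right hr₂))) (lt_irrefl q)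
    · have hr₁q : r₁ < q := (h₁.resolve_right hr₁).lt_of_ne (by rintro rfl; exact hr₁ hq)
      exact (elRank_lt_elRank hr₁q).trans_le le_self_add
    · exact elRank_lt_elRank hlt
  · by_cases h : r ∈ I <;> simp only [h, dite_true, dite_false]
    · exact add_lt_add_right (elRank_lt_ordRank _) _
    · refine (elRank_le_elRank (hr.resolve_right h)).trans_lt (lt_add_of_pos_right _ ?_)
      exact zero_le.trans_lt (elRank_lt_ordRank (⟨q, hq⟩ : I))

theorem rank_boxAugmentation_interval_general {n : ℕ} {P Q : Type u}
    [PartialOrder P] [PartialOrder Q] [WellFoundedLT P] [WellFoundedLT Q]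
    (C : Fin n → Type u) [∀ i, LinearOrder (C i)] [∀ i, WellFoundedLT (C i)]
    (hP : UpwardsLinear P) (hQ : UpwardsLinear Q)
    (η : ((∀ i, C i) × Q) ≃ P) (hbox : IsBoxAugmentationWith P C Q η)
    (q : Q) (q' : WithTop Q)
    (hmax : MaxBranchingFree q q')
    (z : ∀ i, C i) (hz : ∀ (i : Fin n) (x : C i), z i ≤ x) :
    elRank (η (z, q)) ≤ (List.ofFn fun i => ordRank (C i)).foldr (· ⨳ ·) (elRank q) ∧
    ∀ qh ∈ Ival q q', ∀ c : ∀ i, C i,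
      elRank (η (c, qh)) <
        (List.ofFn fun i => ordRank (C i)).foldr (· ⨳ ·)
          (elRank q + ordRank ↥(Ival q q')) := by
  refine ⟨?_, fun qh hqh c => ?_⟩
  · rw [← Fin.univ_nprod_snoc, ← ordRank_Iio]
    refine (hbox.isLabelling hP (T := Set.Iio q) (fun _ _ _ _ h => elRank_lt_elRank h)
      (fun _ hr => elRank_lt_elRank hr) fun y hy => ?_).ordRank_le_nprod
    exact hbox.snd_symm_lt_of_lt_of_forall_le hP hz hy
  · obtain ⟨φ, hφ, hφβ⟩ := exists_strictMonoOn_Iic_union (I := Ival q q')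
      ⟨le_rfl, (WithTop.coe_le_coe.2 hqh.1).trans_lt hqh.2⟩ fun r hr => hr.1
    rw [← Fin.univ_nprod_snoc]
    refine (hbox.isLabelling hP hφ hφβ fun y hy => ?_).elRank_lt_nprod (isLowerSet_Iic _)
      Set.self_mem_Iic
    rcases (Set.mem_Iic.1 hy).lt_or_eq with hy | rfl
    · exact hbox.snd_symm_mem_of_lt hP hQ hmax hqh hy
    · simpa using Or.inr hqh

/-- Suppose the wulpo `P` is a box-augmentation of the nonempty linear well-orders
`C 0, …, C (n-1)` and the wulpo `Q` via `η`, and `[q, q')` is a maximal branching free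
interval of `Q` with `α = rank (Q↾[q, q')) > 0`, and `z i` is the minimum of `C i`. Then
`rank (η (z, q), P) ≤ rank (C 0) ⨳ ⋯ ⨳ rank (C (n-1)) ⨳ rank (q, Q)`, and for every
`q̂ ∈ [q, q')` and all `c i ∈ C i`,
`rank (η (c, q̂), P) < rank (C 0) ⨳ ⋯ ⨳ rank (C (n-1)) ⨳ (rank (q, Q) + α)`. -/
theorem rank_boxAugmentation_interval {n : ℕ} {P Q : Type u}
    [PartialOrder P] [PartialOrder Q] [WellFoundedLT P] [WellFoundedLT Q]
    (C : Fin n → Type u) [∀ i, LinearOrder (C i)] [∀ i, WellFoundedLT (C i)]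
    (hP : UpwardsLinear P) (hQ : UpwardsLinear Q)
    (η : ((∀ i, C i) × Q) ≃ P) (hbox : IsBoxAugmentationWith P C Q η)
    (q : Q) (q' : WithTop Q) (hqq' : (q : WithTop Q) < q')
    (hmax : MaxBranchingFree q q')
    (hα : 0 < ordRank ↥(Ival q q'))
    (z : ∀ i, C i) (hz : ∀ (i : Fin n) (x : C i), z i ≤ x) :
    elRank (η (z, q)) ≤ (List.ofFn fun i => ordRank (C i)).foldr (· ⨳ ·) (elRank q) ∧
    ∀ qh ∈ Ival q q', ∀ c : ∀ i, C i,
      elRank (η (c, qh)) <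
        (List.ofFn fun i => ordRank (C i)).foldr (· ⨳ ·)
          (elRank q + ordRank ↥(Ival q q')) :=
  rank_boxAugmentation_interval_general C hP hQ η hbox q q' hmax z hz
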